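/- The difference between dual objective and primal objective decomposes into nonnegative parts: for any φ ∈ R₀ and any finite measure λ on (P_σ,S), with ν_λ = HZ_Q − H∫_{P_σ}Z_{P*}dλ, one has [E[ν_λ⁺] + Ṽ₀λ(P_σ)] − E[φHZ_Q] = E[(1−φ)ν_λ⁺] + E[φν_λ⁻] + ∫_{P_σ}(Ṽ₀ − E^{P*}[φH]) dλ(P*), and each of the three summands on the right is nonnegative. -/

import Mathlib

/-!
Pointwise, `ν⁺ - ν⁻ = ν`, so `(1 - φ) ν⁺ + φ ν⁻ = ν⁺ - φ ν`; integrating and splitting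
`E[φ ν] = E[φ H Z_Q] - E[φ H ∫ Z dλ]`, the gap identity reduces to Fubini's theorem
`E[φ H ∫ Z dλ] = ∫ E[φ H Z_{P*}] dλ`. Fubini applies because the densities `Z_{P*}` make
`(P*, ω) ↦ Z_{P*}(ω)` integrable for `λ ⊗ P`, so its `ω`-sections are `λ`-integrable a.e., while
`∫ |φ H Z| dλ = |φ H ∫ Z dλ|` is `P`-integrable.
-/

open MeasureTheory Set

/-- The set `R₀` of randomized tests with the capital constraint. -/
def R0 {Ω ι : Type*} [MeasurableSpace Ω] (P : Measure Ω)
    (H : Ω → ℝ) (Z : ι → Ω → ℝ) (V₀ : ℝ) : Set (Ω → ℝ) :=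
  {φ | Measurable φ ∧ (∀ ω, φ ω ∈ Set.Icc (0 : ℝ) 1) ∧
    ∀ i, ∫ ω, φ ω * H ω * Z i ω ∂P ≤ V₀}

section

variable {Ω ι : Type*} [MeasurableSpace Ω] [MeasurableSpace ι] {P : Measure Ω} {μ : Measure ι}
  {Z : ι → Ω → ℝ}

theorem integrable_uncurry_of_integral_eq_one [SFinite P] [IsFiniteMeasure μ]
    (hZ : Measurable fun p : ι × Ω => Z p.1 p.2) (hZpos : ∀ i ω, 0 ≤ Z i ω)
    (hZone : ∀ i, ∫ ω, Z i ω ∂P = 1) :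
    Integrable (fun p : ι × Ω => Z p.1 p.2) (μ.prod P) := by
  refine (integrable_prod_iff hZ.aestronglyMeasurable).2
    ⟨.of_forall fun i => .of_integral_ne_zero (by simp [hZone i]), ?_⟩
  have hnorm : ∀ i, ∫ ω, ‖Z i ω‖ ∂P = 1 := fun i => by
    simpa [Real.norm_of_nonneg (hZpos i _)] using hZone i
  simp only [hnorm, integrable_const]

theorem integrable_prod_mul_of_integrable_mul_integral [SFinite μ] [SFinite P] {g : Ω → ℝ}
    (hZ : Integrable (fun p : ι × Ω => Z p.1 p.2) (μ.prod P)) (hZpos : ∀ i ω, 0 ≤ Z i ω)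
    (hg : AEStronglyMeasurable g P) (hgZ : Integrable (fun ω => g ω * ∫ i, Z i ω ∂μ) P) :
    Integrable (fun p : ι × Ω => g p.2 * Z p.1 p.2) (μ.prod P) := by
  refine (integrable_prod_iff' (hg.comp_snd.mul hZ.aestronglyMeasurable)).2
    ⟨?_, hgZ.norm.congr (.of_forall fun ω => ?_)⟩
  · filter_upwards [hZ.prod_left_ae] with ω hω using hω.const_mul (g ω)
  · simp only [Pi.mul_apply, norm_mul, Real.norm_of_nonneg (hZpos _ ω), integral_const_mul,
      Real.norm_of_nonneg (integral_nonneg fun i => hZpos i ω)]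

theorem integral_one_sub_mul_posPart_add_integral_mul_negPart {φ ν : Ω → ℝ} {c : ℝ}
    (hφ : AEStronglyMeasurable φ P) (hφc : ∀ᵐ ω ∂P, ‖φ ω‖ ≤ c) (hν : Integrable ν P) :
    (∫ ω, (1 - φ ω) * max (ν ω) 0 ∂P) + ∫ ω, φ ω * max (-ν ω) 0 ∂P
      = (∫ ω, max (ν ω) 0 ∂P) - ∫ ω, φ ω * ν ω ∂P := by
  have hφνpos := hν.pos_part.bdd_mul hφ hφc
  have hνpos_sub : Integrable (fun ω => (1 - φ ω) * max (ν ω) 0) P :=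
    (hν.pos_part.sub hφνpos).congr (.of_forall fun ω => by simp only [Pi.sub_apply]; ring)
  calc (∫ ω, (1 - φ ω) * max (ν ω) 0 ∂P) + ∫ ω, φ ω * max (-ν ω) 0 ∂P
      = ∫ ω, ((1 - φ ω) * max (ν ω) 0 + φ ω * max (-ν ω) 0) ∂P :=
        (integral_add hνpos_sub (hν.neg_part.bdd_mul hφ hφc)).symm
    _ = ∫ ω, (max (ν ω) 0 - φ ω * ν ω) ∂P := by
        refine integral_congr_ae (.of_forall fun ω => ?_)
        linear_combination (-φ ω) * max_zero_sub_max_neg_zero_eq_self (ν ω)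
    _ = (∫ ω, max (ν ω) 0 ∂P) - ∫ ω, φ ω * ν ω ∂P :=
        integral_sub hν.pos_part (hν.bdd_mul hφ hφc)

theorem integral_posPart_sub_integral_mul {φ a b : Ω → ℝ} {c : ℝ}
    (hφ : AEStronglyMeasurable φ P) (hφc : ∀ᵐ ω ∂P, ‖φ ω‖ ≤ c)
    (ha : Integrable a P) (hb : Integrable b P) :
    (∫ ω, max (a ω - b ω) 0 ∂P) - ∫ ω, φ ω * a ω ∂P
      = (∫ ω, (1 - φ ω) * max (a ω - b ω) 0 ∂P) + (∫ ω, φ ω * max (-(a ω - b ω)) 0 ∂P)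
        - ∫ ω, φ ω * b ω ∂P := by
  have hφab : ∫ ω, φ ω * (a ω - b ω) ∂P = (∫ ω, φ ω * a ω ∂P) - ∫ ω, φ ω * b ω ∂P := by
    simp only [mul_sub]
    exact integral_sub (ha.bdd_mul hφ hφc) (hb.bdd_mul hφ hφc)
  rw [integral_one_sub_mul_posPart_add_integral_mul_negPart (ν := fun ω => a ω - b ω) hφ hφc
    (ha.sub hb), hφab]
  ring

end

theorem dual_primal_gap_decomposition_general
    {Ω : Type*} [MeasurableSpace Ω] (P : Measure Ω) [IsProbabilityMeasure P]
    {ι : Type*} [MeasurableSpace ι]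
    (H : Ω → ℝ) (hHint : Integrable H P)
    (Z : ι → Ω → ℝ) (hZpos : ∀ i ω, 0 ≤ Z i ω)
    (hZprob : ∀ i, ∫ ω, Z i ω ∂P = 1)
    (hjoint : Measurable fun p : ι × Ω => Z p.1 p.2)
    (V₀ : ℝ)
    (ZQ : Ω → ℝ) (hZQmeas : Measurable ZQ) (hZQpos : ∀ ω, 0 ≤ ZQ ω)
    (hZQbdd : ∃ C, ∀ ω, ZQ ω ≤ C)
    (μ : Measure ι) [IsFiniteMeasure μ]
    (hmix : Integrable (fun ω => H ω * ∫ i, Z i ω ∂μ) P)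
    (φ : Ω → ℝ) (hφ : φ ∈ R0 P H Z V₀) :
    ((∫ ω, max (H ω * ZQ ω - H ω * ∫ i, Z i ω ∂μ) 0 ∂P)
        + V₀ * (μ Set.univ).toReal) - ∫ ω, φ ω * H ω * ZQ ω ∂P
      = (∫ ω, (1 - φ ω) * max (H ω * ZQ ω - H ω * ∫ i, Z i ω ∂μ) 0 ∂P)
        + (∫ ω, φ ω * max (-(H ω * ZQ ω - H ω * ∫ i, Z i ω ∂μ)) 0 ∂P)
        + ∫ i, (V₀ - ∫ ω, φ ω * H ω * Z i ω ∂P) ∂μ ∧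
    0 ≤ ∫ ω, (1 - φ ω) * max (H ω * ZQ ω - H ω * ∫ i, Z i ω ∂μ) 0 ∂P ∧
    0 ≤ ∫ ω, φ ω * max (-(H ω * ZQ ω - H ω * ∫ i, Z i ω ∂μ)) 0 ∂P ∧
    0 ≤ ∫ i, (V₀ - ∫ ω, φ ω * H ω * Z i ω ∂P) ∂μ := by
  obtain ⟨hφm, hφ01, hφV⟩ := hφ
  have hφ1 : ∀ᵐ ω ∂P, ‖φ ω‖ ≤ 1 := .of_forall fun ω => by
    rw [Real.norm_of_nonneg (hφ01 ω).1]; exact (hφ01 ω).2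
  have hHZQ : Integrable (fun ω => H ω * ZQ ω) P := by
    obtain ⟨C, hC⟩ := hZQbdd
    exact hHint.mul_bdd hZQmeas.aestronglyMeasurable
      (.of_forall fun ω => by rw [Real.norm_of_nonneg (hZQpos ω)]; exact hC ω)
  have hφHZ : Integrable (fun p : ι × Ω => φ p.2 * H p.2 * Z p.1 p.2) (μ.prod P) :=
    integrable_prod_mul_of_integrable_mul_integral
      (integrable_uncurry_of_integral_eq_one hjoint hZpos hZprob) hZpos
      (g := fun ω => φ ω * H ω) (hφm.aestronglyMeasurable.mul hHint.aestronglyMeasurable)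
      (by simpa only [mul_assoc] using hmix.bdd_mul hφm.aestronglyMeasurable hφ1)
  have hFubini : ∫ ω, φ ω * H ω * ∫ i, Z i ω ∂μ ∂P = ∫ i, ∫ ω, φ ω * H ω * Z i ω ∂P ∂μ := by
    rw [integral_integral_swap (f := fun i ω => φ ω * H ω * Z i ω) hφHZ]
    simp only [integral_const_mul]
  have hgap := integral_posPart_sub_integral_mul hφm.aestronglyMeasurable hφ1 hHZQ hmix
  simp only [← mul_assoc] at hgap
  have hbudget : ∫ i, (V₀ - ∫ ω, φ ω * H ω * Z i ω ∂P) ∂μ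
      = V₀ * (μ Set.univ).toReal - ∫ i, ∫ ω, φ ω * H ω * Z i ω ∂P ∂μ := by
    rw [integral_sub (integrable_const V₀) hφHZ.integral_prod_left, integral_const, smul_eq_mul,
      measureReal_def, mul_comm]
  refine ⟨by linarith, ?_, ?_, ?_⟩
  · exact integral_nonneg fun ω => mul_nonneg (sub_nonneg.2 (hφ01 ω).2) (le_max_right _ 0)
  · exact integral_nonneg fun ω => mul_nonneg (hφ01 ω).1 (le_max_right _ 0)
  · exact integral_nonneg fun i => sub_nonneg.2 (hφV i)

/-- The primal-dual gap decomposes into three nonnegative parts: for `φ ∈ R₀`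
and a finite measure `λ`, with `ν_λ = HZ_Q − H∫Z_{P*}dλ`,
`[E[ν_λ⁺] + Ṽ₀λ(P_σ)] − E[φHZ_Q]
  = E[(1−φ)ν_λ⁺] + E[φν_λ⁻] + ∫ (Ṽ₀ − E^{P*}[φH]) dλ`. -/
theorem dual_primal_gap_decomposition
    {Ω : Type*} [MeasurableSpace Ω] (P : Measure Ω) [IsProbabilityMeasure P]
    {ι : Type*} [Nonempty ι] [MeasurableSpace ι]
    (H : Ω → ℝ) (hHmeas : Measurable H) (hHint : Integrable H P)
    (hHpos : ∀ ω, 0 ≤ H ω)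
    (Z : ι → Ω → ℝ) (hZmeas : ∀ i, Measurable (Z i)) (hZpos : ∀ i ω, 0 ≤ Z i ω)
    (hZprob : ∀ i, ∫ ω, Z i ω ∂P = 1)
    (hjoint : Measurable fun p : ι × Ω => Z p.1 p.2)
    (hsup : ∃ C, ∀ i, ∫ ω, H ω * Z i ω ∂P ≤ C)
    (V₀ : ℝ) (hV₀ : 0 < V₀)
    (ZQ : Ω → ℝ) (hZQmeas : Measurable ZQ) (hZQpos : ∀ ω, 0 ≤ ZQ ω)
    (hZQbdd : ∃ C, ∀ ω, ZQ ω ≤ C) (hZQprob : ∫ ω, ZQ ω ∂P = 1)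
    (μ : Measure ι) [IsFiniteMeasure μ]
    (hmix : Integrable (fun ω => H ω * ∫ i, Z i ω ∂μ) P)
    (φ : Ω → ℝ) (hφ : φ ∈ R0 P H Z V₀) :
    ((∫ ω, max (H ω * ZQ ω - H ω * ∫ i, Z i ω ∂μ) 0 ∂P)
        + V₀ * (μ Set.univ).toReal) - ∫ ω, φ ω * H ω * ZQ ω ∂P
      = (∫ ω, (1 - φ ω) * max (H ω * ZQ ω - H ω * ∫ i, Z i ω ∂μ) 0 ∂P)
        + (∫ ω, φ ω * max (-(H ω * ZQ ω - H ω * ∫ i, Z i ω ∂μ)) 0 ∂P)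
        + ∫ i, (V₀ - ∫ ω, φ ω * H ω * Z i ω ∂P) ∂μ ∧
    0 ≤ ∫ ω, (1 - φ ω) * max (H ω * ZQ ω - H ω * ∫ i, Z i ω ∂μ) 0 ∂P ∧
    0 ≤ ∫ ω, φ ω * max (-(H ω * ZQ ω - H ω * ∫ i, Z i ω ∂μ)) 0 ∂P ∧
    0 ≤ ∫ i, (V₀ - ∫ ω, φ ω * H ω * Z i ω ∂P) ∂μ :=
  dual_primal_gap_decomposition_general P H hHint Z hZpos hZprob hjoint V₀ ZQ hZQmeas hZQpos hZQbdd
    μ hmix φ hφ
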